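/- arXiv:1202.6565 — 4 statements merged into one kernel-verified Lean document; each statement's English description precedes it below -/
import Mathlib

section
/- Let d ≥ 1 and let Q be a complex polynomial of exact degree d which has no zeros in the open unit disk 𝔻. Then for all u, v ∈ 𝔻: |Q(u)/Q(v) − 1| ≤ (1 + |u − v|/(1 − |v|))^d − 1, and consequently |Q(u)/Q(v)| ≤ (1 + |u − v|/(1 − |v|))^d. -/
open Metric

/-! Writing `Q(w) = c ∏ (w - r)` over the roots, `Q(u)/Q(v) = ∏ (1 + (u - v)/(v - r))`. A root `r`
lies outside the unit disk, so `|v - r| ≥ 1 - |v|` and each factor is within `δ = |u - v|/(1 - |v|)`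
of `1`; a product of `d` numbers within `δ` of `1` is within `(1 + δ)^d - 1` of `1`. -/

theorem Multiset.norm_prod_sub_one_le {R : Type*} [SeminormedCommRing R] [NormOneClass R]
    (s : Multiset R) {ε : ℝ} (h : ∀ a ∈ s, ‖a - 1‖ ≤ ε) :
    ‖s.prod - 1‖ ≤ (1 + ε) ^ card s - 1 := by
  induction s using Multiset.induction with
  | empty => simp
  | cons a s ih =>
    have ha : ‖a - 1‖ ≤ ε := h a (mem_cons_self a s)
    have hs : ‖s.prod - 1‖ ≤ (1 + ε) ^ card s - 1 := ih fun b hb ↦ h b (mem_cons_of_mem hb)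
    have hna : ‖a‖ ≤ 1 + ε := by
      linarith [norm_le_norm_add_norm_sub' a 1, norm_one (α := R)]
    have hnp := mul_le_mul hna hs (norm_nonneg _) (by linarith [norm_nonneg (a - 1)])
    calc ‖(a ::ₘ s).prod - 1‖ = ‖a * (s.prod - 1) + (a - 1)‖ := by rw [prod_cons]; ring_nf
      _ ≤ ‖a‖ * ‖s.prod - 1‖ + ‖a - 1‖ := (norm_add_le _ _).trans (by gcongr; exact norm_mul_le _ _)
      _ ≤ (1 + ε) * ((1 + ε) ^ card s - 1) + ε := by linarith
      _ = (1 + ε) ^ card (a ::ₘ s) - 1 := by rw [card_cons, pow_succ]; ring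

theorem Polynomial.Splits.eval_div_eval_eq_prod_roots {K : Type*} [Field K] {f : Polynomial K}
    (hf : f.Splits) (hf0 : f ≠ 0) (u v : K) :
    f.eval u / f.eval v = (f.roots.map fun r ↦ (u - r) / (v - r)).prod := by
  rw [hf.eval_eq_prod_roots, hf.eval_eq_prod_roots,
    mul_div_mul_left _ _ (leadingCoeff_ne_zero.mpr hf0), Multiset.prod_map_div]

theorem Polynomial.one_le_norm_of_mem_roots {K : Type*} [NormedField K] {f : Polynomial K}
    (hf : ∀ z ∈ ball (0 : K) 1, f.eval z ≠ 0) {r : K} (hr : r ∈ f.roots) : 1 ≤ ‖r‖ := by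
  by_contra! hlt
  exact hf r (mem_ball_zero_iff.mpr hlt) (isRoot_of_mem_roots hr)

theorem norm_sub_div_sub_sub_one_le {K : Type*} [NormedField K] {u v r : K}
    (hv : ‖v‖ < 1) (hr : 1 ≤ ‖r‖) :
    ‖(u - r) / (v - r) - 1‖ ≤ ‖u - v‖ / (1 - ‖v‖) := by
  have hdist : 1 - ‖v‖ ≤ ‖v - r‖ := by
    linarith [norm_sub_norm_le r v, norm_sub_rev r v]
  have hvr : v - r ≠ 0 := norm_pos_iff.mp (by linarith)
  have hfactor : (u - r) / (v - r) - 1 = (u - v) / (v - r) := by field_simp; ring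
  rw [hfactor, norm_div]
  exact div_le_div_of_nonneg_left (norm_nonneg _) (by linarith) hdist

theorem polynomial_no_zero_quotient_bound_general (d : ℕ) (Q : Polynomial ℂ)
    (hdeg : Q.natDegree = d) (hz : ∀ z ∈ Metric.ball (0 : ℂ) 1, Q.eval z ≠ 0)
    (u v : ℂ) (hv : v ∈ Metric.ball (0 : ℂ) 1) :
    ‖Q.eval u / Q.eval v - 1‖ ≤
        (1 + ‖u - v‖ / (1 - ‖v‖)) ^ d - 1 ∧
      ‖Q.eval u / Q.eval v‖ ≤
        (1 + ‖u - v‖ / (1 - ‖v‖)) ^ d := by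
  have hQ : Q ≠ 0 := fun h ↦ hz 0 (mem_ball_self one_pos) (by simp [h])
  have hfactors : ∀ a ∈ Q.roots.map (fun r ↦ (u - r) / (v - r)),
      ‖a - 1‖ ≤ ‖u - v‖ / (1 - ‖v‖) :=
    Multiset.forall_mem_map_iff.mpr fun r hr ↦
      norm_sub_div_sub_sub_one_le (mem_ball_zero_iff.mp hv) (Q.one_le_norm_of_mem_roots hz hr)
  have hmain : ‖Q.eval u / Q.eval v - 1‖ ≤ (1 + ‖u - v‖ / (1 - ‖v‖)) ^ d - 1 := by
    rw [(IsAlgClosed.splits Q).eval_div_eval_eq_prod_roots hQ]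
    simpa [IsAlgClosed.card_roots_eq_natDegree, hdeg] using
      Multiset.norm_prod_sub_one_le _ hfactors
  exact ⟨hmain, by linarith [norm_le_norm_add_norm_sub' (Q.eval u / Q.eval v) 1, norm_one (α := ℂ)]⟩

/-- If `Q` is a complex polynomial of exact degree `d ≥ 1` with no zeros in
the open unit disk, then for all `u, v` in the disk
`|Q(u)/Q(v) - 1| ≤ (1 + |u-v|/(1-|v|))^d - 1`, and consequently
`|Q(u)/Q(v)| ≤ (1 + |u-v|/(1-|v|))^d`. -/
theorem polynomial_no_zero_quotient_bound (d : ℕ) (hd : 1 ≤ d) (Q : Polynomial ℂ)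
    (hdeg : Q.natDegree = d) (hz : ∀ z ∈ Metric.ball (0 : ℂ) 1, Q.eval z ≠ 0)
    (u v : ℂ) (hu : u ∈ Metric.ball (0 : ℂ) 1) (hv : v ∈ Metric.ball (0 : ℂ) 1) :
    ‖Q.eval u / Q.eval v - 1‖ ≤
        (1 + ‖u - v‖ / (1 - ‖v‖)) ^ d - 1 ∧
      ‖Q.eval u / Q.eval v‖ ≤
        (1 + ‖u - v‖ / (1 - ‖v‖)) ^ d :=
  polynomial_no_zero_quotient_bound_general d Q hdeg hz u v hv
end

section
/- Let p be a positive integer, let a₁, …, a_p ∈ ℂ with Σ_{k=1}^{p} |a_k| ≤ 1, and let f(z) = Σ_{k=1}^{p} a_k z^k. Assume f is not identically zero and f(z) ≠ 0 for every z ∈ 𝔻 \ {0}, so f maps 𝔻 \ {0} into 𝔻 \ {0} with f(0) = 0. Then for all x, y ∈ 𝔻 \ {0}: j_{𝔻∖{0}}(f(x), f(y)) ≤ p · j_{𝔻∖{0}}(x, y). Moreover, for f(z) = z^p and x = t, y = s with 0 < s < t < 1/2, equality j_{𝔻∖{0}}(f(t), f(s)) = p · j_{𝔻∖{0}}(t,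 s) holds, so the constant p is sharp. -/
open Metric Filter Topology Set

/-- The distance ratio metric of a domain `G`:
`j_G(x,y) = log(1 + |x-y| / min(d(x,∂G), d(y,∂G)))`. -/
noncomputable def jdist {E : Type*} [PseudoMetricSpace E] (G : Set E) (x y : E) : ℝ :=
  Real.log (1 + dist x y /
    min (Metric.infDist x (frontier G)) (Metric.infDist y (frontier G)))

/-!
On `𝔻 \ {0}` the boundary distance of `z` is `min (‖z‖, 1 - ‖z‖)`. Let `m` be the smaller
boundary distance of `x` and `y` and `c = 1 + ‖x - y‖ / m`; it suffices to bound `‖f x - f y‖`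
by `(c ^ p - 1)` times each of `‖f x‖`, `1 - ‖f x‖`, `‖f y‖`, `1 - ‖f y‖`. Every zero `r` of `f`
is `0` or lies outside `𝔻`, so `‖x - r‖ ≥ m`, and writing `f` as a product over its zeros gives
`‖f y - f x‖ ≤ ‖f x‖ (c ^ p - 1)`. Since `∑ ‖a k‖ ≤ 1`, `f` is `p`-Lipschitz on the closed disk
with `‖f z‖ ≤ ‖z‖`, so by Bernoulli
`‖f x - f y‖ ≤ p ‖x - y‖ ≤ (c ^ p - 1) m ≤ (c ^ p - 1) (1 - ‖f x‖)`.
For `z ^ p` on `(0, 1/2)` both sides equal `p log (t / s)`.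
-/

theorem closure_sdiff_singleton_of_isOpen {X : Type*} [TopologicalSpace X] {s : Set X}
    (hs : IsOpen s) (x : X) [(𝓝[≠] x).NeBot] : closure (s \ {x}) = closure s :=
  (closure_mono sdiff_subset).antisymm <|
    closure_minimal ((dense_compl_singleton x).open_subset_closure_inter hs) isClosed_closure

section PuncturedBall

variable {E : Type*} [NormedAddCommGroup E]

theorem min_norm_one_sub_norm_le_dist (x : E) {r : E} (hr : r ∉ ball (0 : E) 1 \ {0}) :
    min ‖x‖ (1 - ‖x‖) ≤ dist x r := by
  rcases eq_or_ne r 0 with rfl | hr0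
  · exact (min_le_left _ _).trans (dist_zero_right x).ge
  · have hr1 : 1 ≤ ‖r‖ := by simpa [hr0] using hr
    rw [dist_comm, dist_eq_norm]
    linarith [min_le_right ‖x‖ (1 - ‖x‖), norm_sub_norm_le r x]

theorem min_norm_one_sub_norm_pos {x : E} (hx : x ∈ ball (0 : E) 1 \ {0}) :
    0 < min ‖x‖ (1 - ‖x‖) :=
  lt_min (norm_pos_iff.mpr hx.2) (sub_pos.mpr (mem_ball_zero_iff.mp hx.1))

variable [NormedSpace ℝ E] [Nontrivial E]

theorem frontier_ball_sdiff_zero :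
    frontier (ball (0 : E) 1 \ {0}) = closedBall 0 1 \ (ball 0 1 \ {0}) := by
  rw [(isOpen_ball.sdiff isClosed_singleton).frontier_eq,
    closure_sdiff_singleton_of_isOpen isOpen_ball, closure_ball _ one_ne_zero]

theorem infDist_frontier_ball_sdiff_zero {x : E} (hx : x ∈ ball (0 : E) 1 \ {0}) :
    infDist x (frontier (ball (0 : E) 1 \ {0})) = min ‖x‖ (1 - ‖x‖) := by
  have hx0 : x ≠ 0 := hx.2
  have hx1 : ‖x‖ < 1 := mem_ball_zero_iff.mp hx.1
  rw [frontier_ball_sdiff_zero]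
  refine le_antisymm (le_min ?_ ?_)
    ((le_infDist ⟨0, by simp⟩).2 fun r hr => min_norm_one_sub_norm_le_dist x hr.2)
  · simpa using infDist_le_dist_of_mem (x := x)
      (by simp : (0 : E) ∈ closedBall 0 1 \ (ball 0 1 \ {0}))
  · have hmem : ‖x‖⁻¹ • x ∈ closedBall (0 : E) 1 \ (ball 0 1 \ {0}) := by
      simp [norm_smul, hx0]
    refine (infDist_le_dist_of_mem hmem).trans_eq ?_
    have hxpos : 0 < ‖x‖ := norm_pos_iff.mpr hx0
    have hinv : 1 ≤ ‖x‖⁻¹ := one_le_inv₀ hxpos |>.mpr hx1.le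
    rw [dist_eq_norm, ← one_smul ℝ x, smul_smul, ← sub_smul, norm_smul, one_smul, mul_one,
      Real.norm_of_nonpos (by linarith), neg_sub, sub_mul, inv_mul_cancel₀ hxpos.ne', one_mul]

theorem jdist_ball_sdiff_zero {x y : E} (hx : x ∈ ball (0 : E) 1 \ {0})
    (hy : y ∈ ball (0 : E) 1 \ {0}) :
    jdist (ball (0 : E) 1 \ {0}) x y =
      Real.log (1 + ‖x - y‖ / min (min ‖x‖ (1 - ‖x‖)) (min ‖y‖ (1 - ‖y‖))) := by
  rw [jdist, infDist_frontier_ball_sdiff_zero hx, infDist_frontier_ball_sdiff_zero hy, dist_eq_norm]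

end PuncturedBall

theorem nat_mul_le_one_add_div_pow_sub_one_mul (n : ℕ) {t m : ℝ} (ht : 0 ≤ t) (hm : 0 < m) :
    n * t ≤ ((1 + t / m) ^ n - 1) * m := by
  have hbernoulli := one_add_mul_le_pow (by linarith [div_nonneg ht hm.le] : (-2 : ℝ) ≤ t / m) n
  calc (n : ℝ) * t = n * (t / m) * m := by field_simp
    _ ≤ ((1 + t / m) ^ n - 1) * m := by gcongr; linarith

theorem log_one_add_div_le_nat_mul_log (n : ℕ) {d m c : ℝ} (hd : 0 ≤ d) (hm : 0 < m)
    (h : d ≤ (c ^ n - 1) * m) : Real.log (1 + d / m) ≤ n * Real.log c := by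
  rw [← Real.log_pow]
  refine Real.log_le_log (by positivity) ?_
  have : d / m ≤ c ^ n - 1 := (div_le_iff₀ hm).mpr h
  linarith

section NormedField

variable {𝕜 : Type*} [NormedField 𝕜]

theorem norm_pow_sub_pow_le {x y : 𝕜} (hx : ‖x‖ ≤ 1) (hy : ‖y‖ ≤ 1) (k : ℕ) :
    ‖x ^ k - y ^ k‖ ≤ k * ‖x - y‖ := by
  rw [← geom_sum₂_mul, norm_mul]
  gcongr
  refine (norm_sum_le_of_le _ fun i _ => ?_).trans_eq (by simp : ∑ _ ∈ Finset.range k, (1 : ℝ) = k)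
  rw [norm_mul, norm_pow, norm_pow]
  exact mul_le_one₀ (pow_le_one₀ (norm_nonneg _) hx) (by positivity)
    (pow_le_one₀ (norm_nonneg _) hy)

variable {p : ℕ} {a : ℕ → 𝕜}

theorem norm_sum_mul_pow_le (hsum : ∑ k ∈ Finset.Icc 1 p, ‖a k‖ ≤ 1) {z : 𝕜} (hz : ‖z‖ ≤ 1) :
    ‖∑ k ∈ Finset.Icc 1 p, a k * z ^ k‖ ≤ ‖z‖ :=
  calc ‖∑ k ∈ Finset.Icc 1 p, a k * z ^ k‖ ≤ ∑ k ∈ Finset.Icc 1 p, ‖a k‖ * ‖z‖ :=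
        norm_sum_le_of_le _ fun k hk => by
          rw [norm_mul, norm_pow]
          gcongr
          exact pow_le_of_le_one (norm_nonneg z) hz
            (Nat.one_le_iff_ne_zero.mp (Finset.mem_Icc.mp hk).1)
    _ = (∑ k ∈ Finset.Icc 1 p, ‖a k‖) * ‖z‖ := (Finset.sum_mul ..).symm
    _ ≤ ‖z‖ := mul_le_of_le_one_left (norm_nonneg z) hsum

theorem norm_sum_mul_pow_sub_le (hsum : ∑ k ∈ Finset.Icc 1 p, ‖a k‖ ≤ 1) {x y : 𝕜}
    (hx : ‖x‖ ≤ 1) (hy : ‖y‖ ≤ 1) :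
    ‖∑ k ∈ Finset.Icc 1 p, a k * x ^ k - ∑ k ∈ Finset.Icc 1 p, a k * y ^ k‖ ≤ p * ‖x - y‖ := by
  rw [← Finset.sum_sub_distrib]
  calc _ ≤ ∑ k ∈ Finset.Icc 1 p, ‖a k‖ * (p * ‖x - y‖) :=
        norm_sum_le_of_le _ fun k hk => by
          rw [← mul_sub, norm_mul]
          gcongr
          refine (norm_pow_sub_pow_le hx hy k).trans ?_
          gcongr
          exact_mod_cast (Finset.mem_Icc.mp hk).2
    _ = (∑ k ∈ Finset.Icc 1 p, ‖a k‖) * (p * ‖x - y‖) := (Finset.sum_mul ..).symm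
    _ ≤ p * ‖x - y‖ := mul_le_of_le_one_left (by positivity) hsum

theorem Multiset.norm_prod_map_sub_sub_prod_map_sub_le {m : ℝ} (hm : 0 < m) {x y : 𝕜}
    (s : Multiset 𝕜) (hs : ∀ r ∈ s, m ≤ ‖x - r‖) :
    ‖(s.map (y - ·)).prod - (s.map (x - ·)).prod‖ ≤
      ‖(s.map (x - ·)).prod‖ * ((1 + ‖y - x‖ / m) ^ card s - 1) := by
  set c := 1 + ‖y - x‖ / m
  have hc : 1 ≤ c := le_add_of_nonneg_right (by positivity)
  induction s using Multiset.induction with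
  | empty => simp
  | cons r s ih =>
    have hyx : ‖y - x‖ ≤ (c - 1) * ‖x - r‖ := by
      calc ‖y - x‖ = ‖y - x‖ / m * m := (div_mul_cancel₀ _ hm.ne').symm
        _ ≤ ‖y - x‖ / m * ‖x - r‖ := by gcongr; exact hs r (mem_cons_self r s)
        _ = (c - 1) * ‖x - r‖ := by ring
    have hyr : ‖y - r‖ ≤ c * ‖x - r‖ := by
      linarith [norm_sub_le_norm_sub_add_norm_sub y x r]
    have hpow : 0 ≤ c ^ card s - 1 := sub_nonneg.mpr (one_le_pow₀ hc)
    specialize ih fun r' hr' => hs r' (mem_cons_of_mem hr')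
    simp only [map_cons, prod_cons, card_cons, norm_mul]
    set A := (s.map (x - ·)).prod
    set B := (s.map (y - ·)).prod
    calc ‖(y - r) * B - (x - r) * A‖ = ‖(y - r) * (B - A) + (y - x) * A‖ := by ring_nf
      _ ≤ ‖y - r‖ * ‖B - A‖ + ‖y - x‖ * ‖A‖ := by
        grw [norm_add_le, norm_mul, norm_mul]
      _ ≤ c * ‖x - r‖ * (‖A‖ * (c ^ card s - 1)) + (c - 1) * ‖x - r‖ * ‖A‖ := by gcongr
      _ = ‖x - r‖ * ‖A‖ * (c ^ (card s + 1) - 1) := by ring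

open Polynomial in
theorem Polynomial.norm_eval_sub_eval_le [IsAlgClosed 𝕜] (P : 𝕜[X]) {n : ℕ}
    (hn : P.natDegree ≤ n) {m : ℝ} (hm : 0 < m) {x : 𝕜} (hroots : ∀ r ∈ P.roots, m ≤ ‖x - r‖)
    (y : 𝕜) : ‖P.eval y - P.eval x‖ ≤ ‖P.eval x‖ * ((1 + ‖y - x‖ / m) ^ n - 1) := by
  have hc : 1 ≤ 1 + ‖y - x‖ / m := le_add_of_nonneg_right (by positivity)
  rw [(IsAlgClosed.splits P).eval_eq_prod_roots, (IsAlgClosed.splits P).eval_eq_prod_roots,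
    ← mul_sub, norm_mul, norm_mul, mul_assoc]
  gcongr
  refine (P.roots.norm_prod_map_sub_sub_prod_map_sub_le hm hroots).trans ?_
  gcongr
  exact (card_roots' P).trans hn

end NormedField

local notation "𝔻*" => ball (0 : ℂ) 1 \ {(0 : ℂ)}

section PolynomialSelfMap

variable {p : ℕ} {a : ℕ → ℂ} {f : ℂ → ℂ}

open Polynomial in
theorem norm_sub_le_norm_mul_of_ne_zero (hf : ∀ z, f z = ∑ k ∈ Finset.Icc 1 p, a k * z ^ k)
    (hzero : ∀ z ∈ 𝔻*, f z ≠ 0) {m : ℝ} (hm : 0 < m) {x : ℂ}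
    (hmx : m ≤ min ‖x‖ (1 - ‖x‖)) (y : ℂ) :
    ‖f y - f x‖ ≤ ‖f x‖ * ((1 + ‖y - x‖ / m) ^ p - 1) := by
  set P : ℂ[X] := ∑ k ∈ Finset.Icc 1 p, C (a k) * X ^ k
  have hP : ∀ z, P.eval z = f z := fun z => by simp [P, hf, eval_finsetSum]
  have hdeg : P.natDegree ≤ p := natDegree_sum_le_of_forall_le _ _ fun k hk =>
    (natDegree_C_mul_X_pow_le _ _).trans (Finset.mem_Icc.mp hk).2
  have hroots : ∀ r ∈ P.roots, m ≤ ‖x - r‖ := fun r hr => by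
    have hr' : r ∉ 𝔻* := fun hrG => hzero r hrG (by rw [← hP]; exact (mem_roots'.mp hr).2)
    rw [← dist_eq_norm]
    exact hmx.trans (min_norm_one_sub_norm_le_dist x hr')
  simpa only [hP] using P.norm_eval_sub_eval_le hdeg hm hroots y

theorem jdist_map_le_mul_jdist (hf : ∀ z, f z = ∑ k ∈ Finset.Icc 1 p, a k * z ^ k)
    (hsum : ∑ k ∈ Finset.Icc 1 p, ‖a k‖ ≤ 1)
    (hzero : ∀ z ∈ 𝔻*, f z ≠ 0) {x y : ℂ} (hx : x ∈ 𝔻*) (hy : y ∈ 𝔻*) :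
    jdist 𝔻* (f x) (f y) ≤ p * jdist 𝔻* x y := by
  have hx1 : ‖x‖ < 1 := mem_ball_zero_iff.mp hx.1
  have hy1 : ‖y‖ < 1 := mem_ball_zero_iff.mp hy.1
  have hfx : ‖f x‖ ≤ ‖x‖ := hf x ▸ norm_sum_mul_pow_le hsum hx1.le
  have hfy : ‖f y‖ ≤ ‖y‖ := hf y ▸ norm_sum_mul_pow_le hsum hy1.le
  have hfxG : f x ∈ 𝔻* := ⟨mem_ball_zero_iff.mpr (hfx.trans_lt hx1), hzero x hx⟩
  have hfyG : f y ∈ 𝔻* := ⟨mem_ball_zero_iff.mpr (hfy.trans_lt hy1), hzero y hy⟩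
  rw [jdist_ball_sdiff_zero hfxG hfyG, jdist_ball_sdiff_zero hx hy]
  set m := min (min ‖x‖ (1 - ‖x‖)) (min ‖y‖ (1 - ‖y‖))
  have hm : 0 < m := lt_min (min_norm_one_sub_norm_pos hx) (min_norm_one_sub_norm_pos hy)
  set c := 1 + ‖x - y‖ / m
  have hc : 0 ≤ c ^ p - 1 := sub_nonneg.mpr (one_le_pow₀ (le_add_of_nonneg_right (by positivity)))
  have hlip : ‖f x - f y‖ ≤ (c ^ p - 1) * m := by
    rw [hf, hf]
    exact (norm_sum_mul_pow_sub_le hsum hx1.le hy1.le).trans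
      (nat_mul_le_one_add_div_pow_sub_one_mul p (norm_nonneg _) hm)
  have hmx : m ≤ 1 - ‖x‖ := (min_le_left _ _).trans (min_le_right _ _)
  have hmy : m ≤ 1 - ‖y‖ := (min_le_right _ _).trans (min_le_right _ _)
  refine log_one_add_div_le_nat_mul_log p (norm_nonneg _)
    (lt_min (min_norm_one_sub_norm_pos hfxG) (min_norm_one_sub_norm_pos hfyG)) ?_
  rw [mul_min_of_nonneg _ _ hc, mul_min_of_nonneg _ _ hc, mul_min_of_nonneg _ _ hc]
  refine le_min (le_min ?_ ?_) (le_min ?_ ?_)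
  · have := norm_sub_le_norm_mul_of_ne_zero hf hzero hm (min_le_left _ _) y
    rwa [norm_sub_rev y x, norm_sub_rev, mul_comm] at this
  · exact hlip.trans (by gcongr; linarith)
  · rw [mul_comm]
    exact norm_sub_le_norm_mul_of_ne_zero hf hzero hm (min_le_right _ _) x
  · exact hlip.trans (by gcongr; linarith)

end PolynomialSelfMap

theorem jdist_ofReal_ball_sdiff_zero {s t : ℝ} (hs : 0 < s) (hst : s ≤ t) (ht : t ≤ 1 / 2) :
    jdist 𝔻* (t : ℂ) (s : ℂ) = Real.log (t / s) := by
  have hsG : (s : ℂ) ∈ 𝔻* := by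
    refine ⟨?_, by simp [hs.ne']⟩
    rw [mem_ball_zero_iff, Complex.norm_real, Real.norm_of_nonneg hs.le]; linarith
  have htG : (t : ℂ) ∈ 𝔻* := by
    refine ⟨?_, by simp [(hs.trans_le hst).ne']⟩
    rw [mem_ball_zero_iff, Complex.norm_real, Real.norm_of_nonneg (hs.trans_le hst).le]; linarith
  rw [jdist_ball_sdiff_zero htG hsG, ← Complex.ofReal_sub, Complex.norm_real, Complex.norm_real,
    Complex.norm_real, Real.norm_of_nonneg (hs.trans_le hst).le, Real.norm_of_nonneg hs.le,
    Real.norm_of_nonneg (by linarith), min_eq_left (by linarith : t ≤ 1 - t),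
    min_eq_left (by linarith : s ≤ 1 - s), min_eq_right hst]
  congr 1
  field_simp
  ring

theorem polynomial_punctured_disk_jdist_lipschitz_sharp_general (p : ℕ) (hp : 0 < p)
    (a : ℕ → ℂ) (hsum : ∑ k ∈ Finset.Icc 1 p, ‖a k‖ ≤ 1)
    (f : ℂ → ℂ) (hf : ∀ z, f z = ∑ k ∈ Finset.Icc 1 p, a k * z ^ k)
    (hzero : ∀ z ∈ Metric.ball (0 : ℂ) 1 \ {0}, f z ≠ 0) :
    (∀ x ∈ Metric.ball (0 : ℂ) 1 \ {0}, ∀ y ∈ Metric.ball (0 : ℂ) 1 \ {0},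
        jdist (Metric.ball (0 : ℂ) 1 \ {0}) (f x) (f y) ≤
          p * jdist (Metric.ball (0 : ℂ) 1 \ {0}) x y) ∧
      ∀ s t : ℝ, 0 < s → s < t → t < 1 / 2 →
        jdist (Metric.ball (0 : ℂ) 1 \ {0}) ((t : ℂ) ^ p) ((s : ℂ) ^ p) =
          p * jdist (Metric.ball (0 : ℂ) 1 \ {0}) (t : ℂ) (s : ℂ) := by
  refine ⟨fun x hx y hy => jdist_map_le_mul_jdist hf hsum hzero hx hy,
    fun s t hs hst ht => ?_⟩
  have htp : t ^ p ≤ 1 / 2 := (pow_le_of_le_one (hs.trans hst).le (by linarith) hp.ne').trans ht.le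
  rw [← Complex.ofReal_pow, ← Complex.ofReal_pow,
    jdist_ofReal_ball_sdiff_zero (pow_pos hs p) (pow_le_pow_left₀ hs.le hst.le p) htp,
    jdist_ofReal_ball_sdiff_zero hs hst.le ht.le, ← div_pow, Real.log_pow]

/-- If `f(z) = Σ_{k=1}^p a_k z^k` with `Σ |a_k| ≤ 1`, `f` not identically zero
and zero-free on `𝔻 \ {0}`, then `j_{𝔻∖{0}}(f x, f y) ≤ p j_{𝔻∖{0}}(x, y)`
for all `x, y ∈ 𝔻 \ {0}`; for `f(z) = z^p` and `0 < s < t < 1/2` equality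
holds, so the constant `p` is sharp. -/
theorem polynomial_punctured_disk_jdist_lipschitz_sharp (p : ℕ) (hp : 0 < p)
    (a : ℕ → ℂ) (hsum : ∑ k ∈ Finset.Icc 1 p, ‖a k‖ ≤ 1)
    (f : ℂ → ℂ) (hf : ∀ z, f z = ∑ k ∈ Finset.Icc 1 p, a k * z ^ k)
    (hne : ∃ z, f z ≠ 0)
    (hzero : ∀ z ∈ Metric.ball (0 : ℂ) 1 \ {0}, f z ≠ 0) :
    (∀ x ∈ Metric.ball (0 : ℂ) 1 \ {0}, ∀ y ∈ Metric.ball (0 : ℂ) 1 \ {0},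
        jdist (Metric.ball (0 : ℂ) 1 \ {0}) (f x) (f y) ≤
          p * jdist (Metric.ball (0 : ℂ) 1 \ {0}) x y) ∧
      ∀ s t : ℝ, 0 < s → s < t → t < 1 / 2 →
        jdist (Metric.ball (0 : ℂ) 1 \ {0}) ((t : ℂ) ^ p) ((s : ℂ) ^ p) =
          p * jdist (Metric.ball (0 : ℂ) 1 \ {0}) (t : ℂ) (s : ℂ) :=
  polynomial_punctured_disk_jdist_lipschitz_sharp_general p hp a hsum f hf hzero
end

section
/- Let (a_k)_{k≥0} be a sequence of complex numbers with Σ_{k=0}^{∞} |a_k| ≤ 1, and let f(z) = Σ_{k=0}^{∞} a_k z^k be non-constant on the unit disk, so that f maps 𝔻 into 𝔻. Then for all x, y ∈ 𝔻: j_𝔻(f(x), f(y)) ≤ j_𝔻(x, y). The inequality is sharp: for f(z) = z^p with p a positive integer and fixed s ∈ (0,1), the ratio j_𝔻(f(t), f(s)) / j_𝔻(t, s) tends to 1 as t → 1⁻. -/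
/-!
Put `m = max ‖x‖ ‖y‖ < 1` and `S = ∑ ‖aₖ‖ mᵏ ≤ 1`. Then `‖f x‖, ‖f y‖ ≤ S`, and writing
`xᵏ - yᵏ = (x - y) ∑ xⁱ yᵏ⁻¹⁻ⁱ` gives `‖xᵏ - yᵏ‖ ≤ ‖x - y‖ (1 - mᵏ) / (1 - m)`, hence
`‖f x - f y‖ ≤ ‖x - y‖ (∑ ‖aₖ‖ - S) / (1 - m) ≤ ‖x - y‖ (1 - S) / (1 - m)`.
As the boundary distance in the unit ball is `1 - ‖z‖`, this is `j(f x, f y) ≤ j(x, y)`.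

For sharpness, `j(t, s) = log (1 - s) - log (1 - t)` for `0 ≤ s ≤ t < 1`, and
`1 - tᵖ = (1 - t)(1 + t + ⋯ + tᵖ⁻¹)`, so `j(tᵖ, sᵖ)` differs from `j(t, s)` by a quantity
that stays bounded as `t → 1⁻`, while `j(t, s) → ∞`.
-/

open Metric Filter Topology Set

section NormedSpace

variable {E : Type*} [NormedAddCommGroup E] [NormedSpace ℝ E]

theorem exists_norm_eq_one_smul [Nontrivial E] (x : E) : ∃ u : E, ‖u‖ = 1 ∧ x = ‖x‖ • u := by
  rcases eq_or_ne x 0 with rfl | hx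
  · obtain ⟨u, hu⟩ := (NormedSpace.sphere_nonempty (x := (0 : E))).mpr zero_le_one
    exact ⟨u, by simpa using hu, by simp⟩
  · exact ⟨‖x‖⁻¹ • x, by simp [norm_smul, hx], by simp [smul_smul, hx]⟩

theorem infDist_sphere_zero [Nontrivial E] {r : ℝ} {x : E} (hx : ‖x‖ ≤ r) :
    infDist x (sphere 0 r) = r - ‖x‖ := by
  have hr : 0 ≤ r := (norm_nonneg x).trans hx
  refine le_antisymm ?_ ((le_infDist (NormedSpace.sphere_nonempty.mpr hr)).mpr fun y hy => ?_)
  · obtain ⟨u, hu, hxu⟩ := exists_norm_eq_one_smul x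
    have hru : r • u ∈ sphere (0 : E) r := by simp [norm_smul, hu, abs_of_nonneg hr]
    calc infDist x (sphere 0 r) ≤ dist x (r • u) := infDist_le_dist_of_mem hru
      _ = ‖(‖x‖ - r) • u‖ := by rw [dist_eq_norm, sub_smul, ← hxu]
      _ = r - ‖x‖ := by
        rw [norm_smul, hu, mul_one, Real.norm_eq_abs, abs_sub_comm,
          abs_of_nonneg (sub_nonneg.mpr hx)]
  · rw [mem_sphere_zero_iff_norm] at hy
    simpa [hy, dist_comm x, dist_eq_norm] using norm_sub_norm_le y x

theorem jdist_ball_zero [Nontrivial E] {r : ℝ} (hr : 0 < r) {x y : E} (hx : ‖x‖ ≤ r)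
    (hy : ‖y‖ ≤ r) :
    jdist (ball 0 r) x y = Real.log (1 + dist x y / (r - max ‖x‖ ‖y‖)) := by
  rw [jdist, frontier_ball 0 hr.ne', infDist_sphere_zero hx, infDist_sphere_zero hy,
    min_sub_sub_left]

end NormedSpace

section PowerSeries

theorem summable_norm_mul_pow {E : Type*} [SeminormedAddCommGroup E] {a : ℕ → E}
    (ha : Summable (‖a ·‖)) {m : ℝ} (hm0 : 0 ≤ m) (hm : m ≤ 1) : Summable fun k => ‖a k‖ * m ^ k :=
  ha.of_nonneg_of_le (fun _ => by positivity)
    fun _ => mul_le_of_le_one_right (norm_nonneg _) (pow_le_one₀ hm0 hm)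

variable {R : Type*} [NormedCommRing R] [NormOneClass R]

theorem norm_pow_sub_pow_mul_one_sub_le {x y : R} {m : ℝ} (hx : ‖x‖ ≤ m) (hy : ‖y‖ ≤ m)
    (hm : m ≤ 1) (k : ℕ) : ‖x ^ k - y ^ k‖ * (1 - m) ≤ ‖x - y‖ * (1 - m ^ k) := by
  have hm0 : 0 ≤ m := (norm_nonneg x).trans hx
  have hterm : ∀ i ∈ Finset.range k, ‖x ^ i * y ^ (k - 1 - i)‖ ≤ m ^ i := fun i _ =>
    calc ‖x ^ i * y ^ (k - 1 - i)‖ ≤ ‖x‖ ^ i * ‖y‖ ^ (k - 1 - i) :=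
          (norm_mul_le _ _).trans (mul_le_mul (norm_pow_le x i) (norm_pow_le y _)
            (norm_nonneg _) (by positivity))
      _ ≤ m ^ i * 1 := by gcongr; exact pow_le_one₀ (norm_nonneg y) (hy.trans hm)
      _ = m ^ i := mul_one _
  calc ‖x ^ k - y ^ k‖ * (1 - m)
      = ‖(∑ i ∈ Finset.range k, x ^ i * y ^ (k - 1 - i)) * (x - y)‖ * (1 - m) := by
        rw [geom_sum₂_mul]
    _ ≤ (∑ i ∈ Finset.range k, m ^ i) * ‖x - y‖ * (1 - m) := by
        refine mul_le_mul_of_nonneg_right ((norm_mul_le _ _).trans ?_) (by linarith)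
        gcongr
        exact (norm_sum_le _ _).trans (Finset.sum_le_sum hterm)
    _ = ‖x - y‖ * (1 - m ^ k) := by rw [← mul_neg_geom_sum m k]; ring

theorem summable_mul_pow [CompleteSpace R] {a : ℕ → R} (ha : Summable (‖a ·‖)) {x : R}
    (hx : ‖x‖ ≤ 1) : Summable fun k => a k * x ^ k :=
  ha.of_norm_bounded fun _ => (norm_mul_le _ _).trans <| mul_le_of_le_one_right (norm_nonneg _)
    ((norm_pow_le _ _).trans (pow_le_one₀ (norm_nonneg _) hx))

theorem norm_tsum_mul_pow_le {a : ℕ → R} (ha : Summable (‖a ·‖)) {x : R} {m : ℝ}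
    (hx : ‖x‖ ≤ m) (hm : m ≤ 1) : ‖∑' k, a k * x ^ k‖ ≤ ∑' k, ‖a k‖ * m ^ k :=
  tsum_of_norm_bounded (summable_norm_mul_pow ha ((norm_nonneg x).trans hx) hm).hasSum fun k =>
    (norm_mul_le _ _).trans <| mul_le_mul_of_nonneg_left
      ((norm_pow_le x k).trans (pow_le_pow_left₀ (norm_nonneg x) hx k)) (norm_nonneg _)

theorem norm_tsum_mul_pow_sub_le [CompleteSpace R] {a : ℕ → R} (ha : Summable (‖a ·‖))
    {x y : R} {m : ℝ} (hx : ‖x‖ ≤ m) (hy : ‖y‖ ≤ m) (hm : m < 1) :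
    ‖∑' k, a k * x ^ k - ∑' k, a k * y ^ k‖ ≤
      ‖x - y‖ / (1 - m) * (∑' k, ‖a k‖ - ∑' k, ‖a k‖ * m ^ k) := by
  have hm0 : 0 ≤ m := (norm_nonneg x).trans hx
  have hsum : HasSum (fun k => ‖x - y‖ / (1 - m) * (‖a k‖ - ‖a k‖ * m ^ k))
      (‖x - y‖ / (1 - m) * (∑' k, ‖a k‖ - ∑' k, ‖a k‖ * m ^ k)) :=
    (ha.hasSum.sub (summable_norm_mul_pow ha hm0 hm.le).hasSum).mul_left _
  rw [← (summable_mul_pow ha (hx.trans hm.le)).tsum_sub (summable_mul_pow ha (hy.trans hm.le))]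
  refine tsum_of_norm_bounded hsum fun k => ?_
  have hpow : ‖x ^ k - y ^ k‖ ≤ ‖x - y‖ * (1 - m ^ k) / (1 - m) :=
    (le_div_iff₀ (by linarith)).mpr (norm_pow_sub_pow_mul_one_sub_le hx hy hm.le k)
  calc ‖a k * x ^ k - a k * y ^ k‖ ≤ ‖a k‖ * ‖x ^ k - y ^ k‖ := by
        rw [← mul_sub]; exact norm_mul_le _ _
    _ ≤ ‖a k‖ * (‖x - y‖ * (1 - m ^ k) / (1 - m)) := by gcongr
    _ = ‖x - y‖ / (1 - m) * (‖a k‖ - ‖a k‖ * m ^ k) := by ring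

end PowerSeries

theorem jdist_unitBall_tsum_mul_pow_le {R : Type*} [NormedCommRing R] [NormOneClass R]
    [NormedAlgebra ℝ R] [CompleteSpace R] {a : ℕ → R} (ha : Summable (‖a ·‖))
    (hsum : ∑' k, ‖a k‖ ≤ 1) {x y : R} (hx : x ∈ ball 0 1) (hy : y ∈ ball 0 1) :
    jdist (ball 0 1) (∑' k, a k * x ^ k) (∑' k, a k * y ^ k) ≤ jdist (ball 0 1) x y := by
  have := NormOneClass.nontrivial (G := R)
  rw [mem_ball_zero_iff] at hx hy
  set F := fun z : R => ∑' k, a k * z ^ k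
  set m := max ‖x‖ ‖y‖
  have hm0 : 0 ≤ m := (norm_nonneg x).trans (le_max_left _ _)
  have hm : m < 1 := max_lt hx hy
  set S := ∑' k, ‖a k‖ * m ^ k
  have hS : S ≤ ∑' k, ‖a k‖ := (summable_norm_mul_pow ha hm0 hm.le).tsum_le_tsum
    (fun k => mul_le_of_le_one_right (norm_nonneg _) (pow_le_one₀ hm0 hm.le)) ha
  have hFS : max ‖F x‖ ‖F y‖ ≤ S := max_le (norm_tsum_mul_pow_le ha (le_max_left _ _) hm.le)
    (norm_tsum_mul_pow_le ha (le_max_right _ _) hm.le)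
  have hFd : dist (F x) (F y) ≤ dist x y / (1 - m) * (1 - max ‖F x‖ ‖F y‖) := by
    rw [dist_eq_norm, dist_eq_norm]
    refine (norm_tsum_mul_pow_sub_le ha (le_max_left _ _) (le_max_right _ _) hm).trans ?_
    gcongr
  have hM : max ‖F x‖ ‖F y‖ ≤ 1 := hFS.trans (hS.trans hsum)
  rw [jdist_ball_zero one_pos ((le_max_left _ _).trans hM) ((le_max_right _ _).trans hM),
    jdist_ball_zero one_pos hx.le hy.le]
  refine Real.log_le_log (add_pos_of_pos_of_nonneg one_pos
    (div_nonneg dist_nonneg (sub_nonneg.mpr hM))) (add_le_add_right ?_ 1)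
  -- This also covers `max ‖F x‖ ‖F y‖ = 1`, where the left quotient divides by `0` and is `0`.
  exact div_le_of_le_mul₀ (sub_nonneg.mpr hM) (div_nonneg dist_nonneg (by linarith)) hFd

theorem jdist_unitBall_ofReal {s t : ℝ} (hs : 0 ≤ s) (hst : s ≤ t) (ht : t < 1) :
    jdist (ball (0 : ℂ) 1) t s = Real.log (1 - s) - Real.log (1 - t) := by
  have hs' : ‖(s : ℂ)‖ = s := by simp [abs_of_nonneg hs]
  have ht' : ‖(t : ℂ)‖ = t := by simp [abs_of_nonneg (hs.trans hst)]
  have hdist : dist (t : ℂ) s = t - s := by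
    rw [Complex.dist_eq, ← Complex.ofReal_sub, Complex.norm_real,
      Real.norm_of_nonneg (by linarith)]
  rw [jdist_ball_zero one_pos (by linarith) (by linarith), hs', ht', max_eq_left hst, hdist,
    ← Real.log_div (by linarith) (by linarith)]
  have h1t : 1 - t ≠ 0 := by linarith
  congr 1
  field_simp
  ring

theorem tendsto_add_div_self_of_tendsto_atTop {α : Type*} {l : Filter α} {D A : α → ℝ} {c : ℝ}
    (hD : Tendsto D l atTop) (hA : Tendsto A l (𝓝 c)) :
    Tendsto (fun t => (D t + A t) / D t) l (𝓝 1) := by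
  have h : Tendsto (fun t => 1 + A t / D t) l (𝓝 1) := by
    simpa using tendsto_const_nhds.add (hA.div_atTop hD)
  refine h.congr' ?_
  filter_upwards [hD.eventually_gt_atTop 0] with t ht
  rw [add_div, div_self ht.ne']

theorem tendsto_log_one_sub_nhdsLT_one : Tendsto (fun t => Real.log (1 - t)) (𝓝[<] 1) atBot := by
  refine Real.tendsto_log_nhdsGT_zero.comp (tendsto_nhdsWithin_of_tendsto_nhds_of_eventually_within
    _ ?_ (eventually_nhdsWithin_of_forall fun t ht => mem_Ioi.mpr (sub_pos.mpr ht)))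
  have h : Tendsto (fun t : ℝ => 1 - t) (𝓝 1) (𝓝 (1 - 1)) := (continuous_sub_left 1).tendsto 1
  exact (sub_self (1 : ℝ) ▸ h).mono_left nhdsWithin_le_nhds

theorem tendsto_log_geom_sum_nhdsLT_one {p : ℕ} (hp : 0 < p) :
    Tendsto (fun t => Real.log (∑ i ∈ Finset.range p, t ^ i)) (𝓝[<] 1) (𝓝 (Real.log p)) := by
  have h : Tendsto (fun t : ℝ => ∑ i ∈ Finset.range p, t ^ i) (𝓝 1) (𝓝 p) := by
    simpa using (continuous_finsetSum (Finset.range p) fun i _ => continuous_pow i).tendsto (1 : ℝ)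
  exact ((Real.continuousAt_log (Nat.cast_pos.mpr hp).ne').tendsto.comp h).mono_left
    nhdsWithin_le_nhds

theorem tendsto_jdist_unitBall_pow_div_jdist {p : ℕ} (hp : 0 < p) {s : ℝ} (hs0 : 0 ≤ s)
    (hs1 : s < 1) :
    Tendsto (fun t : ℝ =>
        jdist (ball (0 : ℂ) 1) ((t : ℂ) ^ p) ((s : ℂ) ^ p) / jdist (ball (0 : ℂ) 1) t s)
      (𝓝[<] 1) (𝓝 1) := by
  set g := fun t : ℝ => ∑ i ∈ Finset.range p, t ^ i
  have hD : Tendsto (fun t => Real.log (1 - s) - Real.log (1 - t)) (𝓝[<] 1) atTop := by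
    simpa only [sub_eq_add_neg, Function.comp_def] using
      tendsto_atTop_add_const_left _ (Real.log (1 - s))
        (tendsto_neg_atBot_atTop.comp tendsto_log_one_sub_nhdsLT_one)
  have hA : Tendsto (fun t => Real.log (1 - s ^ p) - Real.log (1 - s) - Real.log (g t)) (𝓝[<] 1)
      (𝓝 (Real.log (1 - s ^ p) - Real.log (1 - s) - Real.log p)) :=
    tendsto_const_nhds.sub (tendsto_log_geom_sum_nhdsLT_one hp)
  refine (tendsto_add_div_self_of_tendsto_atTop hD hA).congr' ?_
  filter_upwards [Ioo_mem_nhdsLT_of_mem ⟨hs1, le_rfl⟩] with t ⟨hst, ht1⟩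
  have ht0 : 0 < t := hs0.trans_lt hst
  have hg : 0 < g t := Finset.sum_pos (fun i _ => pow_pos ht0 i) ⟨0, Finset.mem_range.mpr hp⟩
  have hlog : Real.log (1 - t ^ p) = Real.log (1 - t) + Real.log (g t) := by
    rw [← mul_neg_geom_sum, Real.log_mul (by linarith) hg.ne']
  rw [← Complex.ofReal_pow, ← Complex.ofReal_pow,
    jdist_unitBall_ofReal (pow_nonneg hs0 p) (pow_le_pow_left₀ hs0 hst.le p)
      (pow_lt_one₀ ht0.le ht1 hp.ne'), jdist_unitBall_ofReal hs0 hst.le ht1, hlog]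
  ring

theorem power_series_disk_jdist_contraction_sharp_general (a : ℕ → ℂ)
    (hsummable : Summable fun k => ‖a k‖)
    (hsum : ∑' k, ‖a k‖ ≤ 1)
    (f : ℂ → ℂ) (hf : ∀ z, f z = ∑' k, a k * z ^ k) :
    (∀ x ∈ Metric.ball (0 : ℂ) 1, ∀ y ∈ Metric.ball (0 : ℂ) 1,
        jdist (Metric.ball (0 : ℂ) 1) (f x) (f y) ≤ jdist (Metric.ball (0 : ℂ) 1) x y) ∧
      ∀ p : ℕ, 0 < p → ∀ s : ℝ, s ∈ Set.Ioo (0 : ℝ) 1 →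
        Tendsto (fun t : ℝ =>
            jdist (Metric.ball (0 : ℂ) 1) ((t : ℂ) ^ p) ((s : ℂ) ^ p) /
              jdist (Metric.ball (0 : ℂ) 1) (t : ℂ) (s : ℂ))
          (𝓝[<] 1) (𝓝 1) :=
  ⟨fun x hx y hy => by simpa only [hf] using jdist_unitBall_tsum_mul_pow_le hsummable hsum hx hy,
    fun _ hp _ hs => tendsto_jdist_unitBall_pow_div_jdist hp hs.1.le hs.2⟩

/-- If `f(z) = Σ_{k=0}^∞ a_k z^k` with `Σ |a_k| ≤ 1` is non-constant on the
unit disk, then `j_𝔻(f x, f y) ≤ j_𝔻(x, y)` for all `x, y ∈ 𝔻`. The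
inequality is sharp: for `f(z) = z^p` and fixed `s ∈ (0,1)` the ratio
`j_𝔻(f t, f s)/j_𝔻(t, s)` tends to `1` as `t → 1⁻`. -/
theorem power_series_disk_jdist_contraction_sharp (a : ℕ → ℂ)
    (hsummable : Summable fun k => ‖a k‖)
    (hsum : ∑' k, ‖a k‖ ≤ 1)
    (f : ℂ → ℂ) (hf : ∀ z, f z = ∑' k, a k * z ^ k)
    (hnc : ¬ ∀ x ∈ Metric.ball (0 : ℂ) 1, ∀ y ∈ Metric.ball (0 : ℂ) 1, f x = f y) :
    (∀ x ∈ Metric.ball (0 : ℂ) 1, ∀ y ∈ Metric.ball (0 : ℂ) 1,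
        jdist (Metric.ball (0 : ℂ) 1) (f x) (f y) ≤ jdist (Metric.ball (0 : ℂ) 1) x y) ∧
      ∀ p : ℕ, 0 < p → ∀ s : ℝ, s ∈ Set.Ioo (0 : ℝ) 1 →
        Tendsto (fun t : ℝ =>
            jdist (Metric.ball (0 : ℂ) 1) ((t : ℂ) ^ p) ((s : ℂ) ^ p) /
              jdist (Metric.ball (0 : ℂ) 1) (t : ℂ) (s : ℂ))
          (𝓝[<] 1) (𝓝 1) :=
  power_series_disk_jdist_contraction_sharp_general a hsummable hsum f hf
end

section
/- Let n ≥ 2, let a ∈ ℝ^n lie in the boundary hyperplane of the upper half space (i.e., the n-th coordinate of a is 0), let r > 0, and let f(x) = a + r²(x − a)/|x − a|² be the inversion in the sphere S^{n−1}(a, r). Then f maps ℍⁿ onto ℍⁿ, and for all x, y ∈ ℍⁿ: j_{ℍⁿ}(f(x), f(y)) ≤ 2 · j_{ℍⁿ}(x, y). The constant 2 is best possible: taking a = 0, r = 1, x = e_n and y = t·e₁ + e_n, the ratio j_{ℍⁿ}(f(x), f(y)) / j_{ℍⁿ}(x, y) tends to 2 as t → ∞. -/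
/-!
The boundary distance of `x ∈ ℍⁿ` is its last coordinate `xₙ`, and inversion in a sphere
centred on `∂ℍⁿ` scales it: `f(x)ₙ = r² xₙ / |x - a|²`, while
`|f x - f y| = r² |x - y| / (|x - a| |y - a|)`. Hence
`|f x - f y| / f(x)ₙ = (|x - y| / xₙ) · (|x - a| / |y - a|)`, and the triangle inequality together
with `yₙ ≤ |y - a|` bounds the last factor by `1 + |x - y| / yₙ`. With `s = |x - y| / min(xₙ, yₙ)`
this gives `j(f x, f y) ≤ log (1 + s (1 + s)) ≤ log ((1 + s)²) = 2 j(x, y)`.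
For the sharpness example `j(x, y) = log (1 + t)` and `j(f x, f y) = log (1 + t √(t² + 1))`,
which lies between `log ((1 + t)² / 4)` and `log ((1 + t)²)`.
-/

open Metric Filter Topology Set

open EuclideanGeometry Real

section HalfSpace

variable {ι : Type*} [Fintype ι]

lemma EuclideanSpace.apply_le_dist_of_apply_eq_zero {a : EuclideanSpace ℝ ι} {i : ι}
    (ha : a i = 0) (x : EuclideanSpace ℝ ι) : x i ≤ dist x a := by
  have h := PiLp.dist_apply_le x a i
  rw [Real.dist_eq, ha, sub_zero] at h
  exact (le_abs_self _).trans h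

lemma frontier_setOf_apply_pos (i : ι) :
    frontier {x : EuclideanSpace ℝ ι | 0 < x i} = {x | x i = 0} := by
  classical
  have hsurj : Function.Surjective (EuclideanSpace.proj i : EuclideanSpace ℝ ι →L[ℝ] ℝ) :=
    fun c => ⟨EuclideanSpace.single i c, by simp⟩
  rw [show {x : EuclideanSpace ℝ ι | 0 < x i} = EuclideanSpace.proj i ⁻¹' Ioi 0 from rfl,
    ← (ContinuousLinearMap.isOpenMap _ hsurj).preimage_frontier_eq_frontier_preimage
      (EuclideanSpace.proj i).continuous, frontier_Ioi]
  rfl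

lemma infDist_setOf_apply_eq_zero (x : EuclideanSpace ℝ ι) (i : ι) :
    infDist x {y : EuclideanSpace ℝ ι | y i = 0} = |x i| := by
  classical
  have hne : {y : EuclideanSpace ℝ ι | y i = 0}.Nonempty := ⟨0, by simp⟩
  refine le_antisymm ?_ ((le_infDist hne).2 fun y (hy : y i = 0) => ?_)
  · have hfoot : x - EuclideanSpace.single i (x i) ∈ {y : EuclideanSpace ℝ ι | y i = 0} := by
      simp
    exact (infDist_le_dist_of_mem hfoot).trans_eq (by simp)
  · simpa [hy, Real.dist_eq] using PiLp.dist_apply_le x y i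

lemma jdist_setOf_apply_pos {x y : EuclideanSpace ℝ ι} {i : ι} (hx : 0 < x i) (hy : 0 < y i) :
    jdist {z : EuclideanSpace ℝ ι | 0 < z i} x y = log (1 + dist x y / min (x i) (y i)) := by
  rw [jdist, frontier_setOf_apply_pos, infDist_setOf_apply_eq_zero,
    infDist_setOf_apply_eq_zero, abs_of_pos hx, abs_of_pos hy]

end HalfSpace

lemma Real.log_one_add_le_two_mul_log_one_add {s s' : ℝ} (hs : 0 ≤ s) (hs' : 0 ≤ s')
    (h : s' ≤ s * (1 + s)) : log (1 + s') ≤ 2 * log (1 + s) := by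
  calc log (1 + s') ≤ log ((1 + s) ^ 2) := log_le_log (by positivity) (by nlinarith)
    _ = 2 * log (1 + s) := by simp [log_pow]

lemma tendsto_log_div_log_of_sq_bounds {α : Type*} {l : Filter α} {g h : α → ℝ} {c : ℝ}
    (hc : 0 < c) (hh : Tendsto h l atTop) (hlow : ∀ᶠ t in l, c * h t ^ 2 ≤ g t)
    (hup : ∀ᶠ t in l, g t ≤ h t ^ 2) :
    Tendsto (fun t => log (g t) / log (h t)) l (𝓝 2) := by
  have hlog := tendsto_log_atTop.comp hh
  have hlower : Tendsto (fun t => 2 + log c / log (h t)) l (𝓝 2) := by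
    simpa [div_eq_mul_inv] using (hlog.inv_tendsto_atTop.const_mul (log c)).const_add 2
  refine tendsto_of_tendsto_of_tendsto_of_le_of_le' hlower tendsto_const_nhds ?_ ?_
  · filter_upwards [hlow, hh.eventually_gt_atTop 1] with t hg h1
    have hpos : 0 < log (h t) := log_pos h1
    rw [add_div' _ _ _ hpos.ne', div_le_div_iff_of_pos_right hpos]
    calc 2 * log (h t) + log c = log (c * h t ^ 2) := by
          rw [log_mul hc.ne' (by positivity), log_pow]; push_cast; ring
      _ ≤ log (g t) := log_le_log (by positivity) hg
  · filter_upwards [hup, hlow, hh.eventually_gt_atTop 1] with t hg hg' h1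
    have hpos : 0 < log (h t) := log_pos h1
    rw [div_le_iff₀ hpos]
    have hgpos : 0 < g t := (by positivity : 0 < c * h t ^ 2).trans_le hg'
    calc log (g t) ≤ log (h t ^ 2) := log_le_log hgpos hg
      _ = 2 * log (h t) := by simp [log_pow]

section Inversion

variable {ι : Type*} [Fintype ι] {a : EuclideanSpace ℝ ι} {i : ι} {r : ℝ}

lemma inversion_apply_of_apply_eq_zero (ha : a i = 0) (r : ℝ) (x : EuclideanSpace ℝ ι) :
    inversion a r x i = (r / dist x a) ^ 2 * x i := by
  simp [inversion, ha]

lemma inversion_apply_pos (ha : a i = 0) (hr : r ≠ 0) {x : EuclideanSpace ℝ ι} (hx : 0 < x i) :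
    0 < inversion a r x i := by
  have hxa : 0 < dist x a := hx.trans_le (EuclideanSpace.apply_le_dist_of_apply_eq_zero ha x)
  rw [inversion_apply_of_apply_eq_zero ha]
  positivity

lemma image_inversion_setOf_apply_pos (ha : a i = 0) (hr : r ≠ 0) :
    inversion a r '' {x : EuclideanSpace ℝ ι | 0 < x i} = {x | 0 < x i} :=
  have hmaps : MapsTo (inversion a r) {x | 0 < x i} {x | 0 < x i} :=
    fun _ hx => inversion_apply_pos ha hr hx
  (InvOn.bijOn ⟨fun x _ => inversion_inversion a hr x, fun x _ => inversion_inversion a hr x⟩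
    hmaps hmaps).image_eq

lemma dist_inversion_div_apply_le (ha : a i = 0) (hr : r ≠ 0) {x y : EuclideanSpace ℝ ι}
    (hx : 0 < x i) (hy : 0 < y i) :
    dist (inversion a r x) (inversion a r y) / inversion a r x i ≤
      dist x y / x i * (1 + dist x y / y i) := by
  have hxa := EuclideanSpace.apply_le_dist_of_apply_eq_zero ha x
  have hya := EuclideanSpace.apply_le_dist_of_apply_eq_zero ha y
  have hratio : dist x a / dist y a ≤ 1 + dist x y / y i := by
    rw [div_le_iff₀ (hy.trans_le hya)]
    calc dist x a ≤ dist y a + dist x y := by linarith [dist_triangle x y a]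
      _ ≤ dist y a + dist x y * (dist y a / y i) := by
        gcongr
        exact le_mul_of_one_le_right dist_nonneg ((one_le_div hy).2 hya)
      _ = (1 + dist x y / y i) * dist y a := by ring
  rw [dist_inversion_inversion (fun h => by simp [h, ha] at hx) (fun h => by simp [h, ha] at hy),
    inversion_apply_of_apply_eq_zero ha]
  calc r ^ 2 / (dist x a * dist y a) * dist x y / ((r / dist x a) ^ 2 * x i)
      = dist x y / x i * (dist x a / dist y a) := by
        have hxa' := hx.trans_le hxa
        have hya' := hy.trans_le hya
        field_simp
    _ ≤ dist x y / x i * (1 + dist x y / y i) := by gcongr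

lemma jdist_inversion_le (ha : a i = 0) (hr : r ≠ 0) {x y : EuclideanSpace ℝ ι}
    (hx : 0 < x i) (hy : 0 < y i) :
    jdist {z : EuclideanSpace ℝ ι | 0 < z i} (inversion a r x) (inversion a r y) ≤
      2 * jdist {z : EuclideanSpace ℝ ι | 0 < z i} x y := by
  have hfx := inversion_apply_pos ha hr hx
  have hfy := inversion_apply_pos ha hr hy
  rw [jdist_setOf_apply_pos hfx hfy, jdist_setOf_apply_pos hx hy]
  have hxy := dist_inversion_div_apply_le ha hr hx hy
  have hyx := dist_inversion_div_apply_le ha hr hy hx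
  rw [dist_comm, dist_comm y] at hyx
  have hxm : min (x i) (y i) ≤ x i := min_le_left _ _
  have hym : min (x i) (y i) ≤ y i := min_le_right _ _
  have hm : 0 < min (x i) (y i) := lt_min hx hy
  refine log_one_add_le_two_mul_log_one_add (by positivity) (by positivity) ?_
  rcases min_choice (inversion a r x i) (inversion a r y i) with h | h <;> rw [h]
  · exact hxy.trans (by gcongr)
  · exact hyx.trans (by gcongr)

end Inversion

lemma inversion_zero_one {E : Type*} [NormedAddCommGroup E] [InnerProductSpace ℝ E] (x : E) :
    inversion (0 : E) 1 x = (‖x‖ ^ 2)⁻¹ • x := by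
  simp [inversion]

section Sharpness

variable {ι : Type*} [Fintype ι] [DecidableEq ι] {i j : ι} {t : ℝ}

lemma norm_smul_single_add_single_sq (hji : j ≠ i) (t : ℝ) :
    ‖t • EuclideanSpace.single j (1 : ℝ) + EuclideanSpace.single i 1‖ ^ 2 = t ^ 2 + 1 := by
  rw [EuclideanSpace.norm_sq_eq]
  simp [Finset.sum_add_distrib, add_sq, hji.symm, mul_ite]

lemma dist_single_smul_single_add (i j : ι) (t : ℝ) :
    dist (EuclideanSpace.single i (1 : ℝ)) (t • EuclideanSpace.single j 1 +
      EuclideanSpace.single i 1) = |t| := by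
  rw [add_comm, dist_self_add_right, norm_smul]
  simp

lemma jdist_single_smul_single_add (hji : j ≠ i) (ht : 0 ≤ t) :
    jdist {z : EuclideanSpace ℝ ι | 0 < z i} (EuclideanSpace.single i 1)
      (t • EuclideanSpace.single j 1 + EuclideanSpace.single i 1) = log (1 + t) := by
  rw [jdist_setOf_apply_pos (by simp) (by simp [hji]), dist_single_smul_single_add,
    abs_of_nonneg ht]
  simp [hji]

lemma jdist_inversion_single_smul_single_add (hji : j ≠ i) (ht : 0 ≤ t) :
    jdist {z : EuclideanSpace ℝ ι | 0 < z i} (inversion 0 1 (EuclideanSpace.single i 1))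
      (inversion 0 1 (t • EuclideanSpace.single j 1 + EuclideanSpace.single i 1)) =
      log (1 + t * √(t ^ 2 + 1)) := by
  set y := t • EuclideanSpace.single j (1 : ℝ) + EuclideanSpace.single i 1
  have hy : dist y 0 = √(t ^ 2 + 1) := by
    rw [dist_zero_right, ← norm_smul_single_add_single_sq hji t, Real.sqrt_sq (norm_nonneg _)]
  have hs : 0 < √(t ^ 2 + 1) := by positivity
  have hss : √(t ^ 2 + 1) ^ 2 = t ^ 2 + 1 := Real.sq_sqrt (by positivity)
  have h0 : (0 : EuclideanSpace ℝ ι) i = 0 := rfl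
  rw [jdist_setOf_apply_pos (inversion_apply_pos h0 one_ne_zero (by simp))
      (inversion_apply_pos h0 one_ne_zero (by simp [y, hji])),
    dist_inversion_inversion (by simp) (dist_pos.1 (hy ▸ hs)),
    inversion_apply_of_apply_eq_zero h0, inversion_apply_of_apply_eq_zero h0, hy]
  simp only [y, dist_single_smul_single_add, abs_of_nonneg ht, PiLp.add_apply, PiLp.smul_apply,
    PiLp.single_apply, hji.symm, if_false, if_true, smul_zero, zero_add, mul_one,
    dist_zero_right, PiLp.norm_single, norm_one, one_pow, div_one]
  have hle : (1 / √(t ^ 2 + 1)) ^ 2 ≤ 1 := by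
    rw [div_pow, hss, one_pow]
    exact div_le_one_of_le₀ (by nlinarith) (by positivity)
  rw [min_eq_right hle]
  congr 2
  field_simp

end Sharpness

lemma tendsto_log_one_add_mul_sqrt_div_log_one_add :
    Tendsto (fun t => log (1 + t * √(t ^ 2 + 1)) / log (1 + t)) atTop (𝓝 2) := by
  refine tendsto_log_div_log_of_sq_bounds (by norm_num : (0 : ℝ) < 1 / 4)
    (tendsto_atTop_add_const_left _ 1 tendsto_id) ?_ ?_ <;>
    filter_upwards [eventually_ge_atTop 0] with t ht
  · have : t ≤ √(t ^ 2 + 1) := Real.le_sqrt_of_sq_le (by linarith)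
    nlinarith
  · have : √(t ^ 2 + 1) ≤ 1 + t := Real.sqrt_le_iff.2 ⟨by linarith, by nlinarith⟩
    nlinarith

/-- The inversion `f(x) = a + r²(x-a)/|x-a|²` in a sphere centered on the
boundary hyperplane maps the upper half space `ℍⁿ` onto itself and satisfies
`j_{ℍⁿ}(f x, f y) ≤ 2 j_{ℍⁿ}(x, y)`. The constant `2` is best possible:
for `a = 0`, `r = 1`, `x = eₙ`, `y = t e₁ + eₙ`, the ratio tends to `2` as
`t → ∞`. -/
theorem inversion_halfspace_jdist_lipschitz_sharp (n : ℕ) (hn : 2 ≤ n)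
    (a : EuclideanSpace ℝ (Fin n)) (ha : a ⟨n - 1, by omega⟩ = 0)
    (r : ℝ) (hr : 0 < r)
    (f : EuclideanSpace ℝ (Fin n) → EuclideanSpace ℝ (Fin n))
    (hf : ∀ x, f x = a + (r ^ 2 / ‖x - a‖ ^ 2) • (x - a)) :
    f '' {x : EuclideanSpace ℝ (Fin n) | 0 < x ⟨n - 1, by omega⟩} =
        {x : EuclideanSpace ℝ (Fin n) | 0 < x ⟨n - 1, by omega⟩} ∧
      (∀ x ∈ {x : EuclideanSpace ℝ (Fin n) | 0 < x ⟨n - 1, by omega⟩},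
        ∀ y ∈ {x : EuclideanSpace ℝ (Fin n) | 0 < x ⟨n - 1, by omega⟩},
          jdist {x : EuclideanSpace ℝ (Fin n) | 0 < x ⟨n - 1, by omega⟩} (f x) (f y) ≤
            2 * jdist {x : EuclideanSpace ℝ (Fin n) | 0 < x ⟨n - 1, by omega⟩} x y) ∧
      Tendsto (fun t : ℝ =>
          jdist {x : EuclideanSpace ℝ (Fin n) | 0 < x ⟨n - 1, by omega⟩}
              ((‖(EuclideanSpace.single (⟨n - 1, by omega⟩ : Fin n) (1 : ℝ))‖ ^ 2)⁻¹ •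
                EuclideanSpace.single (⟨n - 1, by omega⟩ : Fin n) (1 : ℝ))
              ((‖t • EuclideanSpace.single (⟨0, by omega⟩ : Fin n) (1 : ℝ) +
                  EuclideanSpace.single (⟨n - 1, by omega⟩ : Fin n) (1 : ℝ)‖ ^ 2)⁻¹ •
                (t • EuclideanSpace.single (⟨0, by omega⟩ : Fin n) (1 : ℝ) +
                  EuclideanSpace.single (⟨n - 1, by omega⟩ : Fin n) (1 : ℝ))) /
            jdist {x : EuclideanSpace ℝ (Fin n) | 0 < x ⟨n - 1, by omega⟩}
              (EuclideanSpace.single (⟨n - 1, by omega⟩ : Fin n) (1 : ℝ))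
              (t • EuclideanSpace.single (⟨0, by omega⟩ : Fin n) (1 : ℝ) +
                EuclideanSpace.single (⟨n - 1, by omega⟩ : Fin n) (1 : ℝ)))
        atTop (𝓝 2) := by
  obtain rfl : f = inversion a r := funext fun x => by
    rw [hf, inversion, vsub_eq_sub, vadd_eq_add, dist_eq_norm, div_pow, add_comm]
  have hji : (⟨0, by omega⟩ : Fin n) ≠ ⟨n - 1, by omega⟩ := by
    rw [ne_eq, Fin.mk.injEq]
    omega
  refine ⟨image_inversion_setOf_apply_pos ha hr.ne',
    fun x hx y hy => jdist_inversion_le ha hr.ne' hx hy,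
    tendsto_log_one_add_mul_sqrt_div_log_one_add.congr' ?_⟩
  filter_upwards [eventually_ge_atTop 0] with t ht
  rw [← inversion_zero_one, ← inversion_zero_one, jdist_inversion_single_smul_single_add hji ht,
    jdist_single_smul_single_add hji ht]
end
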